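/- With Γ(X) = sum_ω Π(ω|X) γ(ω) and γ a non-decreasing function of ω (in the coordinatewise order), it holds that Γ(X) ≥ Γ̃(W(X)), where Γ̃(w) denotes the expectation of γ under the product Bernoulli measure with all edge probabilities equal to p(w). Moreover w ↦ Γ̃(w) is non-increasing in w. -/

import Mathlib

/-! The Bernoulli mean of a monotone function is affine in each single edge probability, with
non-negative slope: conditioned on the other edges, opening the edge can only increase the function.
Raising the probabilities one edge at a time therefore increases the mean. Since `p` is
non-increasing and every `|X u - X v|` is at most `W(X)`, each edge probability `p |X u - X v|`
dominates `p (W(X))`; comparing two constant probability vectors gives the monotonicity of `Γ̃`. -/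

/-- The oscillation `W(X) = max_{u,v} |X u - X v|`. -/
noncomputable def osc {V : Type*} [Fintype V] [Nonempty V] (X : V → ℝ) : ℝ :=
  Finset.univ.sup' Finset.univ_nonempty fun p : V × V => |X p.1 - X p.2|

/-- The product Bernoulli kernel `Π(ω | X)`. -/
noncomputable def PiK {V : Type*} [Fintype V] (p : ℝ → ℝ) (X : V → ℝ)
    (ω : V → V → Bool) : ℝ :=
  ∏ e : V × V, (if ω e.1 e.2 then p |X e.1 - X e.2| else 1 - p |X e.1 - X e.2|)

open Finset

section Oscillation

variable {V : Type*} [Fintype V] [Nonempty V]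

theorem abs_sub_le_osc (X : V → ℝ) (u v : V) : |X u - X v| ≤ osc X :=
  le_sup' (fun p : V × V => |X p.1 - X p.2|) (mem_univ (u, v))

theorem osc_nonneg (X : V → ℝ) : 0 ≤ osc X :=
  let ⟨v⟩ := ‹Nonempty V›
  (abs_nonneg _).trans (abs_sub_le_osc X v v)

theorem osc_le {X : V → ℝ} {c : ℝ} (h : ∀ u v, |X u - X v| ≤ c) : osc X ≤ c :=
  sup'_le _ _ fun e _ => h e.1 e.2

end Oscillation

theorem funSplitAt_symm_apply_self {α β : Type*} [DecidableEq α] (i : α) (b : β)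
    (ρ : {j // j ≠ i} → β) : (Equiv.funSplitAt i β).symm (b, ρ) i = b := by
  simp [Equiv.funSplitAt_symm_apply]

theorem funSplitAt_symm_apply_subtype {α β : Type*} [DecidableEq α] (i : α) (b : β)
    (ρ : {j // j ≠ i} → β) (j : {j // j ≠ i}) : (Equiv.funSplitAt i β).symm (b, ρ) j = ρ j := by
  simp [Equiv.funSplitAt_symm_apply, j.2]

section Bernoulli

variable {ι : Type*} [Fintype ι] [DecidableEq ι]

noncomputable def bernoulliMean (q : ι → ℝ) (g : (ι → Bool) → ℝ) : ℝ :=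
  ∑ σ : ι → Bool, (∏ i, if σ i then q i else 1 - q i) * g σ

theorem bernoulliMean_eq_sum_funSplitAt (q : ι → ℝ) (g : (ι → Bool) → ℝ) (i : ι) :
    bernoulliMean q g = ∑ ρ : {j // j ≠ i} → Bool, (∏ j, if ρ j then q j else 1 - q j) *
      (q i * g ((Equiv.funSplitAt i Bool).symm (true, ρ)) +
        (1 - q i) * g ((Equiv.funSplitAt i Bool).symm (false, ρ))) := by
  rw [bernoulliMean, ← (Equiv.funSplitAt i Bool).symm.sum_comp, Fintype.sum_prod_type,
    Fintype.sum_bool, ← sum_add_distrib]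
  refine sum_congr rfl fun ρ _ => ?_
  simp only [Fintype.prod_eq_mul_prod_subtype_ne _ i, funSplitAt_symm_apply_self,
    funSplitAt_symm_apply_subtype, if_true, Bool.false_eq_true, if_false]
  ring

theorem bernoulliMean_le_update {g : (ι → Bool) → ℝ} (hg : Monotone g) {q : ι → ℝ}
    (hq : ∀ j, q j ∈ Set.Icc (0 : ℝ) 1) {i : ι} {t : ℝ} (ht : q i ≤ t) :
    bernoulliMean q g ≤ bernoulliMean (Function.update q i t) g := by
  rw [bernoulliMean_eq_sum_funSplitAt q g i, bernoulliMean_eq_sum_funSplitAt _ g i,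
    Function.update_self]
  refine sum_le_sum fun ρ _ => ?_
  have hrest : ∀ j : {j // j ≠ i}, Function.update q i t j = q j :=
    fun j => Function.update_of_ne j.2 t q
  simp only [hrest]
  have hP : 0 ≤ ∏ j : {j // j ≠ i}, if ρ j then q j else 1 - q j :=
    prod_nonneg fun j _ => by have := hq j; split <;> linarith [this.1, this.2]
  have hg10 : g ((Equiv.funSplitAt i Bool).symm (false, ρ)) ≤
      g ((Equiv.funSplitAt i Bool).symm (true, ρ)) :=
    hg fun j => by by_cases hj : j = i <;> simp [Equiv.funSplitAt_symm_apply, hj]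
  exact mul_le_mul_of_nonneg_left (by nlinarith) hP

theorem bernoulliMean_mono {g : (ι → Bool) → ℝ} (hg : Monotone g) {q q' : ι → ℝ}
    (hq : ∀ i, q i ∈ Set.Icc (0 : ℝ) 1) (hq' : ∀ i, q' i ∈ Set.Icc (0 : ℝ) 1) (hle : q ≤ q') :
    bernoulliMean q g ≤ bernoulliMean q' g := by
  have hpiecewise : ∀ s : Finset ι, bernoulliMean q g ≤ bernoulliMean (s.piecewise q' q) g := by
    intro s
    induction s using Finset.induction_on with
    | empty => simp
    | insert i s hi ih =>
      rw [piecewise_insert]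
      refine ih.trans (bernoulliMean_le_update hg (fun j => ?_) ?_)
      · by_cases hj : j ∈ s <;> simp [hj, hq j, hq' j]
      · rw [piecewise_eq_of_notMem _ _ _ hi]
        exact hle i
  simpa using hpiecewise univ

theorem sum_curry_eq_bernoulliMean {V : Type*} [Fintype V] [DecidableEq V] (q : V × V → ℝ)
    (γ : (V → V → Bool) → ℝ) :
    ∑ ω : V → V → Bool, (∏ e : V × V, if ω e.1 e.2 then q e else 1 - q e) * γ ω =
      bernoulliMean q (γ ∘ Function.curry) := by
  rw [bernoulliMean, ← (Equiv.curry V V Bool).sum_comp]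
  rfl

end Bernoulli

theorem stmt15_general {V : Type*} [Fintype V] [DecidableEq V] [Nonempty V]
    (p : ℝ → ℝ) (hp : AntitoneOn p (Set.Icc 0 1))
    (hpr : ∀ x ∈ Set.Icc (0:ℝ) 1, p x ∈ Set.Icc (0:ℝ) 1)
    (γ : (V → V → Bool) → ℝ) (hγmono : Monotone γ)
    (X : V → ℝ) (hX : ∀ v, X v ∈ Set.Icc (0:ℝ) 1) :
    (∑ ω : V → V → Bool,
        (∏ e : V × V, (if ω e.1 e.2 then p (osc X) else 1 - p (osc X))) * γ ω) ≤
      (∑ ω : V → V → Bool, PiK p X ω * γ ω) ∧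
    AntitoneOn (fun w : ℝ => ∑ ω : V → V → Bool,
        (∏ e : V × V, (if ω e.1 e.2 then p w else 1 - p w)) * γ ω) (Set.Icc 0 1) := by
  have hdiff : ∀ u v, |X u - X v| ∈ Set.Icc (0 : ℝ) 1 := fun u v =>
    ⟨abs_nonneg _, by simpa [Real.dist_eq] using Real.dist_le_of_mem_Icc_01 (hX u) (hX v)⟩
  have hosc : osc X ∈ Set.Icc (0 : ℝ) 1 := ⟨osc_nonneg X, osc_le fun u v => (hdiff u v).2⟩
  have hγ : Monotone (γ ∘ Function.curry) := hγmono.comp fun _ _ h u v => h (u, v)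
  simp only [PiK, sum_curry_eq_bernoulliMean]
  refine ⟨?_, fun w₁ hw₁ w₂ hw₂ hw => ?_⟩
  · exact bernoulliMean_mono hγ (fun _ => hpr _ hosc) (fun e => hpr _ (hdiff e.1 e.2))
      fun e => hp (hdiff e.1 e.2) hosc (abs_sub_le_osc X e.1 e.2)
  · exact bernoulliMean_mono hγ (fun _ => hpr _ hw₂) (fun _ => hpr _ hw₁) fun _ => hp hw₁ hw₂ hw

/-- With `Γ(X) = ∑_ω Π(ω|X) γ(ω)` and `γ` non-decreasing with values in
`[0,1)`, one has `Γ(X) ≥ Γ̃(W(X))`, where `Γ̃(w)` is the mean of `γ` under the product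
Bernoulli measure with all edge probabilities `p(w)`; moreover `Γ̃` is non-increasing on
`[0,1]`. -/
theorem stmt15 {V : Type*} [Fintype V] [DecidableEq V] [Nonempty V]
    (p : ℝ → ℝ) (hp : AntitoneOn p (Set.Icc 0 1)) (hp0 : p 0 = 1)
    (hpr : ∀ x ∈ Set.Icc (0:ℝ) 1, p x ∈ Set.Icc (0:ℝ) 1)
    (γ : (V → V → Bool) → ℝ) (hγmono : Monotone γ) (hγr : ∀ ω, γ ω ∈ Set.Ico (0:ℝ) 1)
    (X : V → ℝ) (hX : ∀ v, X v ∈ Set.Icc (0:ℝ) 1) :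
    (∑ ω : V → V → Bool,
        (∏ e : V × V, (if ω e.1 e.2 then p (osc X) else 1 - p (osc X))) * γ ω) ≤
      (∑ ω : V → V → Bool, PiK p X ω * γ ω) ∧
    AntitoneOn (fun w : ℝ => ∑ ω : V → V → Bool,
        (∏ e : V × V, (if ω e.1 e.2 then p w else 1 - p w)) * γ ω) (Set.Icc 0 1) :=
  stmt15_general p hp hpr γ hγmono X hX
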